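/- Suppose X₁⊛Y₁ and X₂⊛Y₂ share the same model functions γ, ω, with δ(u) = u - ω(u) increasing and ω(u) = γ(u) for all u ≥ 0. If X₁ ≤_hr X₂ and Y₂ ≤_st Y₁, then V₂^s ≤_st V₁^s, where V₁^s = min{X₁⊛Y₁, X₂, X₃,...,Xₙ} and V₂^s = min{X₁, X₂⊛Y₂, X₃,...,Xₙ}. -/

import Mathlib

/-!
Write `F, G` for the survival functions of `X₁, X₂` and `f, g` for their densities. Under
`X₁ ≤_hr X₂` the function `s ↦ G u * F s - G s * F u` is nonnegative on `(-∞, u]` and vanishes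
at `u`, so its derivative there is nonpositive: `g u * F u ≤ f u * G u`. Together with
`G u * F t ≤ G t * F u` for `u ≤ t` this gives `F t * g u ≤ G t * f u`, and with `Y₂ ≤_st Y₁`
the standby integrand of `X₂ ⊛ Y₂`, scaled by `F t`, is dominated by that of `X₁ ⊛ Y₁`, scaled
by `G t`. Integrating over `[0, t]` and adding `F t * G t` to both sides gives the claim.
-/

open Set Filter Topology MeasureTheory

/-- `X ≤_hr Y` for survival functions `F` of `X` and `G` of `Y`: `F / G` is antitone, written
without division. -/
def HazardRateLE (F G : ℝ → ℝ) : Prop :=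
  ∀ s t, s ≤ t → G s * F t ≤ G t * F s

lemma HasDerivAt.nonpos_of_isMinOn_Iic {h : ℝ → ℝ} {d t : ℝ} (hd : HasDerivAt h d t)
    (hmin : IsMinOn h (Iic t) t) : d ≤ 0 := by
  refine le_of_tendsto (hasDerivAt_iff_tendsto_slope_left_right.mp hd).1 ?_
  filter_upwards [self_mem_nhdsWithin] with s (hs : s < t)
  rw [slope_def_field]
  exact div_nonpos_of_nonneg_of_nonpos (sub_nonneg.2 (hmin hs.le)) (by linarith)

section HazardRate

variable {F G f g : ℝ → ℝ}

lemma HazardRateLE.mul_density_le (hF : ∀ u, HasDerivAt F (-f u) u)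
    (hG : ∀ u, HasDerivAt G (-g u) u) (hhr : HazardRateLE F G) (u : ℝ) :
    g u * F u ≤ f u * G u := by
  have hderiv : HasDerivAt (fun s => G u * F s - G s * F u) (G u * -f u - -g u * F u) u :=
    ((hF u).const_mul (G u)).sub ((hG u).mul_const (F u))
  have hmin : IsMinOn (fun s => G u * F s - G s * F u) (Iic u) u := fun s (hs : s ≤ u) => by
    simpa using hhr s u hs
  linarith [hderiv.nonpos_of_isMinOn_Iic hmin]

lemma HazardRateLE.survival_mul_density_le (hF : ∀ u, HasDerivAt F (-f u) u)
    (hG : ∀ u, HasDerivAt G (-g u) u) (hhr : HazardRateLE F G) {u t : ℝ} (hut : u ≤ t)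
    (hFu : 0 < F u) (hFt : 0 ≤ F t) (hf : 0 ≤ f u) :
    F t * g u ≤ G t * f u := by
  refine le_of_mul_le_mul_right ?_ hFu
  calc F t * g u * F u = F t * (g u * F u) := by ring
    _ ≤ F t * (f u * G u) := mul_le_mul_of_nonneg_left (hhr.mul_density_le hF hG u) hFt
    _ = f u * (G u * F t) := by ring
    _ ≤ f u * (G t * F u) := mul_le_mul_of_nonneg_left (hhr u t hut) hf
    _ = G t * f u * F u := by ring

end HazardRate

lemma intervalIntegrable_comp_const_sub_mul {S δ f : ℝ → ℝ} {t : ℝ} (hS : Antitone S)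
    (hδ : MonotoneOn δ (Ici 0)) (ht : 0 ≤ t) (hf : ContinuousOn f (uIcc 0 t)) :
    IntervalIntegrable (fun u => S (t - δ u) * f u) volume 0 t := by
  have hmono : MonotoneOn (fun u => S (t - δ u)) (uIcc 0 t) := by
    rw [uIcc_of_le ht]
    exact fun a ha b hb hab => hS (by linarith [hδ ha.1 hb.1 hab])
  exact hmono.intervalIntegrable.mul_continuousOn hf

theorem model_II_series_st_common_model_general
    (SX1 SX2 SY1 SY2 SH fX1 fX2 : ℝ → ℝ) (ω : ℝ → ℝ)
    -- densities
    (hd1 : ∀ u, HasDerivAt SX1 (-(fX1 u)) u) (hd2 : ∀ u, HasDerivAt SX2 (-(fX2 u)) u)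
    (hf1_nonneg : ∀ u, 0 ≤ fX1 u) (hf2_nonneg : ∀ u, 0 ≤ fX2 u)
    (hf1_cont : Continuous fX1)
    -- survival functions
    (hSX1_pos : ∀ u ≥ 0, 0 < SX1 u)
    (hSY1_anti : Antitone SY1)
    (hSY1_nonneg : ∀ u, 0 ≤ SY1 u) (hSY2_nonneg : ∀ u, 0 ≤ SY2 u)
    (hSH_nonneg : ∀ u, 0 ≤ SH u)
    -- common model function: γ, ω increasing, 0 ≤ ω(u) = γ(u) ≤ u, δ increasing
    (hδ_mono : MonotoneOn (fun u => u - ω u) (Set.Ici 0))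
    -- X₁ ≤_hr X₂ and Y₂ ≤_st Y₁
    (hhrX : ∀ s t : ℝ, s ≤ t → SX2 s * SX1 t ≤ SX2 t * SX1 s)
    (hstY : ∀ u, SY2 u ≤ SY1 u) :
    -- conclusion: V₂ˢ ≤_st V₁ˢ
    ∀ t ≥ 0,
      SX1 t * (SX2 t + ∫ u in (0:ℝ)..t, SY2 (t - (u - ω u)) * fX2 u) * SH t ≤
      (SX1 t + ∫ u in (0:ℝ)..t, SY1 (t - (u - ω u)) * fX1 u) * SX2 t * SH t := by
  intro t ht
  have hint := intervalIntegrable_comp_const_sub_mul hSY1_anti hδ_mono ht hf1_cont.continuousOn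
  have hpointwise : ∀ u ∈ Ioc 0 t,
      SX1 t * (SY2 (t - (u - ω u)) * fX2 u) ≤ SX2 t * (SY1 (t - (u - ω u)) * fX1 u) := by
    intro u hu
    have hX := HazardRateLE.survival_mul_density_le hd1 hd2 hhrX hu.2 (hSX1_pos u hu.1.le)
      (hSX1_pos t ht).le (hf1_nonneg u)
    have hXnonneg : 0 ≤ SX1 t * fX2 u := mul_nonneg (hSX1_pos t ht).le (hf2_nonneg u)
    calc SX1 t * (SY2 (t - (u - ω u)) * fX2 u) = SY2 (t - (u - ω u)) * (SX1 t * fX2 u) := by ring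
      _ ≤ SY1 (t - (u - ω u)) * (SX2 t * fX1 u) := mul_le_mul (hstY _) hX hXnonneg (hSY1_nonneg _)
      _ = SX2 t * (SY1 (t - (u - ω u)) * fX1 u) := by ring
  have hintegral : SX1 t * (∫ u in (0:ℝ)..t, SY2 (t - (u - ω u)) * fX2 u) ≤
      SX2 t * ∫ u in (0:ℝ)..t, SY1 (t - (u - ω u)) * fX1 u := by
    simp only [intervalIntegral.integral_of_le ht, ← integral_const_mul]
    refine setIntegral_mono_of_nonneg (fun u hu => ?_) hpointwise (hint.1.const_mul _)
    exact mul_nonneg (hSX1_pos t ht).le (mul_nonneg (hSY2_nonneg _) (hf2_nonneg u))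
  nlinarith [mul_le_mul_of_nonneg_right hintegral (hSH_nonneg t)]

theorem model_II_series_st_common_model
    (SX1 SX2 SY1 SY2 SH fX1 fX2 : ℝ → ℝ) (γ ω : ℝ → ℝ)
    -- densities
    (hd1 : ∀ u, HasDerivAt SX1 (-(fX1 u)) u) (hd2 : ∀ u, HasDerivAt SX2 (-(fX2 u)) u)
    (hf1_nonneg : ∀ u, 0 ≤ fX1 u) (hf2_nonneg : ∀ u, 0 ≤ fX2 u)
    (hf1_cont : Continuous fX1) (hf2_cont : Continuous fX2)
    -- survival functions
    (hSX1_pos : ∀ u ≥ 0, 0 < SX1 u) (hSX2_pos : ∀ u ≥ 0, 0 < SX2 u)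
    (hSY1_anti : Antitone SY1) (hSY2_anti : Antitone SY2)
    (hSY1_nonneg : ∀ u, 0 ≤ SY1 u) (hSY2_nonneg : ∀ u, 0 ≤ SY2 u)
    (hSH_nonneg : ∀ u, 0 ≤ SH u)
    -- common model function: γ, ω increasing, 0 ≤ ω(u) = γ(u) ≤ u, δ increasing
    (hγ_mono : MonotoneOn γ (Set.Ici 0)) (hω_mono : MonotoneOn ω (Set.Ici 0))
    (hω_bd : ∀ u ≥ 0, 0 ≤ ω u ∧ ω u ≤ u)
    (hωγ : ∀ u ≥ 0, ω u = γ u)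
    (hδ_mono : MonotoneOn (fun u => u - ω u) (Set.Ici 0))
    -- X₁ ≤_hr X₂ and Y₂ ≤_st Y₁
    (hhrX : ∀ s t : ℝ, s ≤ t → SX2 s * SX1 t ≤ SX2 t * SX1 s)
    (hstY : ∀ u, SY2 u ≤ SY1 u) :
    -- conclusion: V₂ˢ ≤_st V₁ˢ
    ∀ t ≥ 0,
      SX1 t * (SX2 t + ∫ u in (0:ℝ)..t, SY2 (t - (u - ω u)) * fX2 u) * SH t ≤
      (SX1 t + ∫ u in (0:ℝ)..t, SY1 (t - (u - ω u)) * fX1 u) * SX2 t * SH t :=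
  model_II_series_st_common_model_general SX1 SX2 SY1 SY2 SH fX1 fX2 ω hd1 hd2 hf1_nonneg hf2_nonneg
    hf1_cont hSX1_pos hSY1_anti hSY1_nonneg hSY2_nonneg hSH_nonneg hδ_mono hhrX hstY
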